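/- Let p ∈ [1,2], σ > 0 and a ∈ ℝ. Then D( Exp(p;a,σ) ‖ Exp(p;0,σ) ) ≤ |a|^p / (p σ^p). -/

import Mathlib

open MeasureTheory Real

/-- The univariate `p`-exponential distribution `Exp(p; a, b)`: the probability measure on `ℝ`
with density `C_{p,b}⁻¹ exp(−|x−a|^p/(p b^p))`. -/
noncomputable def pExpDist (p a b : ℝ) : Measure ℝ :=
  (∫⁻ x : ℝ, ENNReal.ofReal (Real.exp (-(|x| ^ p / (p * b ^ p)))))⁻¹ •
    MeasureTheory.volume.withDensity fun x =>
      ENNReal.ofReal (Real.exp (-(|x - a| ^ p / (p * b ^ p))))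

/-- The Kullback–Leibler divergence `D(P‖Q) = ∫ log(dP/dQ) dP`. -/
noncomputable def klDivergence {α : Type*} [MeasurableSpace α] (P Q : Measure α) : ℝ :=
  ∫ x, Real.log (P.rnDeriv Q x).toReal ∂P

/-!
Write `w x = exp (-|x| ^ p / (p σ ^ p))` and `Z = ∫ w`. The log-likelihood ratio of the two
distributions is `(|x| ^ p - |x - a| ^ p) / (p σ ^ p)`, so after the substitution `x = y + a`
the divergence is `(p σ ^ p Z)⁻¹ ∫ (|y + a| ^ p - |y| ^ p) w y dy`. As `w` is even, this
integral equals its average with the same integral for `-a`, and for `p ≤ 2` Clarkson's scalar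
inequality `|y + a| ^ p + |y - a| ^ p ≤ 2 (|y| ^ p + |a| ^ p)` bounds that average by `|a| ^ p Z`.
-/

open Set
open scoped ENNReal NNReal

/-- Clarkson's inequality for scalars: by the parallelogram law and concavity of
`s ↦ s ^ (p / 2)`, the mean of `|u ± v| ^ p` is at most `(u ^ 2 + v ^ 2) ^ (p / 2)`, which is
subadditive. -/
lemma abs_add_rpow_add_abs_sub_rpow_le {p : ℝ} (hp0 : 0 ≤ p) (hp2 : p ≤ 2) (u v : ℝ) :
    |u + v| ^ p + |u - v| ^ p ≤ 2 * (|u| ^ p + |v| ^ p) := by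
  have hq0 : 0 ≤ p / 2 := by linarith
  have hq1 : p / 2 ≤ 1 := by linarith
  have h_sq (t : ℝ) : |t| ^ p = (t ^ 2) ^ (p / 2) := by
    rw [← sq_abs, ← Real.rpow_natCast_mul (abs_nonneg t)]
    norm_num
    ring_nf
  have h_mid := (Real.concaveOn_rpow hq0 hq1).2 (mem_Ici.2 (sq_nonneg (u + v)))
    (mem_Ici.2 (sq_nonneg (u - v))) (by norm_num : (0 : ℝ) ≤ 1 / 2)
    (by norm_num : (0 : ℝ) ≤ 1 / 2) (by norm_num)
  simp only [smul_eq_mul] at h_mid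
  simp only [h_sq]
  calc ((u + v) ^ 2) ^ (p / 2) + ((u - v) ^ 2) ^ (p / 2)
      = 2 * (1 / 2 * ((u + v) ^ 2) ^ (p / 2) + 1 / 2 * ((u - v) ^ 2) ^ (p / 2)) := by ring
    _ ≤ 2 * (1 / 2 * (u + v) ^ 2 + 1 / 2 * (u - v) ^ 2) ^ (p / 2) := by gcongr
    _ = 2 * (u ^ 2 + v ^ 2) ^ (p / 2) := by ring_nf
    _ ≤ 2 * ((u ^ 2) ^ (p / 2) + (v ^ 2) ^ (p / 2)) := by
      gcongr
      exact Real.rpow_add_le_add_rpow (sq_nonneg u) (sq_nonneg v) hq0 hq1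

lemma abs_add_rpow_le {p : ℝ} (hp0 : 0 ≤ p) (hp2 : p ≤ 2) (u v : ℝ) :
    |u + v| ^ p ≤ 2 * (|u| ^ p + |v| ^ p) :=
  (le_add_of_nonneg_right (by positivity)).trans (abs_add_rpow_add_abs_sub_rpow_le hp0 hp2 u v)

section ShiftedMoment

variable {p : ℝ} {w : ℝ → ℝ}

lemma integrable_abs_add_rpow_mul (hp0 : 0 ≤ p) (hp2 : p ≤ 2) (hw : Integrable w)
    (hwp : Integrable fun y => |y| ^ p * w y) (t : ℝ) :
    Integrable fun y => |y + t| ^ p * w y := by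
  refine ((hwp.norm.const_mul 2).add (hw.norm.const_mul (2 * |t| ^ p))).mono'
    (((continuous_add_const t).abs.rpow_const fun _ => Or.inr hp0).aestronglyMeasurable.mul
      hw.aestronglyMeasurable) (ae_of_all _ fun y => ?_)
  simp only [Pi.add_apply, norm_mul, Real.norm_eq_abs,
    abs_of_nonneg (rpow_nonneg (abs_nonneg _) p)]
  nlinarith [abs_add_rpow_le hp0 hp2 y t, abs_nonneg (w y)]

lemma integral_abs_add_rpow_mul_le (hp0 : 0 ≤ p) (hp2 : p ≤ 2) (hw_even : ∀ y, w (-y) = w y)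
    (hw0 : ∀ y, 0 ≤ w y) (hw : Integrable w) (hwp : Integrable fun y => |y| ^ p * w y)
    (a : ℝ) : ∫ y, (|y + a| ^ p - |y| ^ p) * w y ≤ |a| ^ p * ∫ y, w y := by
  have h_refl : ∫ y, |y + -a| ^ p * w y = ∫ y, |y + a| ^ p * w y := by
    rw [← integral_neg_eq_self]
    congr with y
    rw [hw_even, show -y + -a = -(y + a) by ring, abs_neg]
  have h_sum : (∫ y, |y + a| ^ p * w y) + ∫ y, |y + -a| ^ p * w y
      ≤ ∫ y, (2 * (|y| ^ p * w y) + 2 * |a| ^ p * w y) := by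
    rw [← integral_add (integrable_abs_add_rpow_mul hp0 hp2 hw hwp a)
      (integrable_abs_add_rpow_mul hp0 hp2 hw hwp (-a))]
    refine integral_mono_of_nonneg (ae_of_all _ fun y => ?_)
      ((hwp.const_mul 2).add (hw.const_mul _)) (ae_of_all _ fun y => ?_)
    · have := hw0 y
      positivity
    · have := mul_le_mul_of_nonneg_right
        (abs_add_rpow_add_abs_sub_rpow_le hp0 hp2 y a) (hw0 y)
      simp only [← sub_eq_add_neg]
      linarith
  rw [integral_add (hwp.const_mul 2) (hw.const_mul _), integral_const_mul,
    integral_const_mul, h_refl] at h_sum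
  simp only [sub_mul]
  rw [integral_sub (integrable_abs_add_rpow_mul hp0 hp2 hw hwp a) hwp]
  linarith

end ShiftedMoment

lemma integrable_comp_abs_of_integrableOn_Ioi {f : ℝ → ℝ} (hf : IntegrableOn f (Ioi 0)) :
    Integrable fun x => f |x| := by
  have h_pos : IntegrableOn (fun x => f |x|) (Ici 0) :=
    Iff.mpr integrableOn_Ici_iff_integrableOn_Ioi <|
      hf.congr_fun (fun x hx => by rw [abs_of_pos hx]) measurableSet_Ioi
  have h_neg : IntegrableOn (fun x => f |x|) (Iio 0) :=
    (neg_zero (G := ℝ) ▸ hf).comp_neg_Iio.congr_fun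
      (fun x hx => by rw [abs_of_neg hx]) measurableSet_Iio
  simpa [Iio_union_Ici] using h_neg.union h_pos

lemma integrable_abs_rpow_mul_exp_neg_abs_rpow_div {p s k : ℝ} (hs : -1 < s) (hp : 0 < p)
    (hk : 0 < k) : Integrable fun x : ℝ => |x| ^ s * exp (-(|x| ^ p / k)) := by
  refine integrable_comp_abs_of_integrableOn_Ioi (f := fun x => x ^ s * exp (-(x ^ p / k))) ?_
  simpa only [neg_mul, inv_mul_eq_div] using
    integrableOn_rpow_mul_exp_neg_mul_rpow hs hp (inv_pos.2 hk)

lemma klDivergence_smul_withDensity_ofReal {α : Type*} [MeasurableSpace α] {μ : Measure α}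
    [SigmaFinite μ] {c : ℝ≥0∞} (hc : c ≠ ∞) {f g : α → ℝ} (hf : Measurable f)
    (hg : Measurable g) (hf0 : ∀ x, 0 ≤ f x) (hg0 : ∀ x, 0 < g x) :
    klDivergence (c • μ.withDensity fun x => ENNReal.ofReal (f x))
      (c • μ.withDensity fun x => ENNReal.ofReal (g x))
      = c.toReal * ∫ x, f x * log (f x / g x) ∂μ := by
  lift c to ℝ≥0 using hc
  set Q := (c : ℝ≥0∞) • μ.withDensity fun x => ENNReal.ofReal (g x)
  have : SigmaFinite Q := (inferInstance : SigmaFinite (c • _))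
  have h_ratio : Measurable fun x => ENNReal.ofReal (f x / g x) := (hf.div hg).ennreal_ofReal
  have hPQ : (c : ℝ≥0∞) • μ.withDensity (fun x => ENNReal.ofReal (f x))
      = Q.withDensity fun x => ENNReal.ofReal (f x / g x) := by
    rw [withDensity_smul_measure, ← withDensity_mul _ hg.ennreal_ofReal h_ratio]
    congr 2 with x
    rw [Pi.mul_apply, ← ENNReal.ofReal_mul (hg0 x).le, mul_div_cancel₀ _ (hg0 x).ne']
  have hrn := (withDensity_absolutelyContinuous Q fun x => ENNReal.ofReal (f x / g x)).ae_eq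
    (Measure.rnDeriv_withDensity Q h_ratio)
  rw [klDivergence, hPQ, integral_congr_ae (hrn.mono fun x hx => by
      rw [hx, ENNReal.toReal_ofReal (div_nonneg (hf0 x) (hg0 x).le)]), ← hPQ,
    integral_smul_measure, integral_withDensity_eq_integral_toReal_smul hf.ennreal_ofReal
      (ae_of_all _ fun _ => ENNReal.ofReal_lt_top)]
  simp only [ENNReal.toReal_ofReal (hf0 _), smul_eq_mul, ENNReal.coe_toReal]

section PExp

variable {p b : ℝ}

/-- The unnormalised density of `Exp(p; 0, b)`. -/
noncomputable def pExpWeight (p b x : ℝ) : ℝ := exp (-(|x| ^ p / (p * b ^ p)))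

lemma pExpDist_eq (p a b : ℝ) :
    pExpDist p a b = (∫⁻ x, ENNReal.ofReal (pExpWeight p b x))⁻¹ •
      volume.withDensity fun x => ENNReal.ofReal (pExpWeight p b (x - a)) := rfl

lemma continuous_pExpWeight (hp : 0 < p) : Continuous (pExpWeight p b) :=
  continuous_exp.comp ((continuous_abs.rpow_const fun _ => Or.inr hp.le).div_const _).neg

lemma integrable_abs_rpow_mul_pExpWeight {s : ℝ} (hs : -1 < s) (hp : 0 < p) (hb : 0 < b) :
    Integrable fun x => |x| ^ s * pExpWeight p b x :=
  integrable_abs_rpow_mul_exp_neg_abs_rpow_div hs hp (by positivity)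

lemma integrable_pExpWeight (hp : 0 < p) (hb : 0 < b) : Integrable (pExpWeight p b) := by
  simpa using integrable_abs_rpow_mul_pExpWeight (s := 0) (by norm_num) hp hb

lemma pExpWeight_neg (x : ℝ) : pExpWeight p b (-x) = pExpWeight p b x := by
  simp only [pExpWeight, abs_neg]

lemma integral_pExpWeight_pos (hp : 0 < p) (hb : 0 < b) : 0 < ∫ x, pExpWeight p b x :=
  integral_exp_pos (integrable_pExpWeight hp hb)

lemma klDivergence_pExpDist_shift (hp : 0 < p) (hb : 0 < b) (a : ℝ) :
    klDivergence (pExpDist p a b) (pExpDist p 0 b)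
      = (∫ y, (|y + a| ^ p - |y| ^ p) * pExpWeight p b y) / (p * b ^ p)
        / ∫ y, pExpWeight p b y := by
  have hw := continuous_pExpWeight (b := b) hp
  have hZ := integral_pExpWeight_pos hp hb
  have h_mass :
      ∫⁻ x, ENNReal.ofReal (pExpWeight p b x) = ENNReal.ofReal (∫ x, pExpWeight p b x) :=
    (ofReal_integral_eq_lintegral_ofReal (integrable_pExpWeight hp hb)
      (ae_of_all _ fun _ => (exp_pos _).le)).symm
  have h_log (x : ℝ) : pExpWeight p b (x - a) * log (pExpWeight p b (x - a) / pExpWeight p b x)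
      = (|x - a + a| ^ p - |x - a| ^ p) * pExpWeight p b (x - a) / (p * b ^ p) := by
    simp only [pExpWeight, ← exp_sub, log_exp, sub_add_cancel]
    ring
  simp only [pExpDist_eq, sub_zero]
  rw [klDivergence_smul_withDensity_ofReal (f := fun x => pExpWeight p b (x - a))
    (ENNReal.inv_ne_top.2 (h_mass ▸ (ENNReal.ofReal_pos.2 hZ).ne'))
    (hw.comp (continuous_sub_right a)).measurable hw.measurable (fun _ => (exp_pos _).le)
    (fun _ => exp_pos _), h_mass, ENNReal.toReal_inv, ENNReal.toReal_ofReal hZ.le]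
  simp only [h_log]
  rw [integral_div, integral_sub_right_eq_self
    (fun y => (|y + a| ^ p - |y| ^ p) * pExpWeight p b y) a]
  ring

end PExp

/-- For `p ∈ [1,2]`, `σ > 0` and `a ∈ ℝ`:
`D(Exp(p;a,σ) ‖ Exp(p;0,σ)) ≤ |a|^p/(p σ^p)`. -/
theorem klDiv_pExp_shift_le (p σ a : ℝ) (hp1 : 1 ≤ p) (hp2 : p ≤ 2) (hσ : 0 < σ) :
    klDivergence (pExpDist p a σ) (pExpDist p 0 σ) ≤ |a| ^ p / (p * σ ^ p) := by
  have hp : 0 < p := by linarith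
  have hZ := integral_pExpWeight_pos hp hσ
  have h_shift := integral_abs_add_rpow_mul_le hp.le hp2 pExpWeight_neg (fun _ => (exp_pos _).le)
    (integrable_pExpWeight hp hσ) (integrable_abs_rpow_mul_pExpWeight (by linarith) hp hσ) a
  rw [klDivergence_pExpDist_shift hp hσ a]
  calc _ ≤ |a| ^ p * (∫ y, pExpWeight p σ y) / (p * σ ^ p) / ∫ y, pExpWeight p σ y := by
        gcongr
    _ = |a| ^ p / (p * σ ^ p) := by
      field_simp
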